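/- arXiv:2405.13180 — 4 statements merged into one kernel-verified Lean document; each statement's English description precedes it below -/
import Mathlib

section
/- Suppose that for every x ∈ ℝ^{d_x} the operator norm bound ‖(I − K H) ∘ DF(x)‖ ≤ λ holds for some constant λ ∈ (0,1), and that ‖(I − K H)(F_s(x) − F(x))‖ ≤ ε for every x ∈ ℝ^{d_x}. Let the true signal satisfy x_t^true = F(x_{t−1}^true) and the observations y_t = H x_t^true + γ η_t for t ≥ 1, where the η_t are i.i.d. random vectors in ℝ^{d_y} with E‖η_t‖ ≤ A for some constant A > 0. Let the surrogate 3DVar filter satisfy x_t^s = (I − K H) F_s(x_{t−1}^s) + K y_t for t ≥ 1. Then there exists a constant c > 0, independent of γ, λ and ε (depending only on ‖K‖ and A), such that limsup_{t→∞} E‖x_t^s − x_t^true‖ ≤ c (γ + ε)/(1 − λ). -/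
/-!
With `L = I - K H`, the true state also satisfies `x_{t+1} = L F(x_t) + K H x_{t+1}`, so the
filter error splits as
`L (F_s(x^s_t) - F(x^s_t)) + (L F(x^s_t) - L F(x_t)) + γ K η_{t+1}`.
By the mean value theorem `L ∘ F` is `λ`-Lipschitz, hence the mean error `a_t` obeys
`a_{t+1} ≤ λ a_t + γ ‖K‖ A + ε`, and iterating this affine recursion gives
`limsup a_t ≤ (γ ‖K‖ A + ε) / (1 - λ) ≤ max 1 (‖K‖ A) (γ + ε) / (1 - λ)`.
-/

open MeasureTheory Filter ProbabilityTheory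

abbrev Ex (d : ℕ) := EuclideanSpace ℝ (Fin d)

theorem norm_map_sub_le_of_norm_comp_fderiv_le {E G G' : Type*}
    [NormedAddCommGroup E] [NormedSpace ℝ E] [NormedAddCommGroup G] [NormedSpace ℝ G]
    [NormedAddCommGroup G'] [NormedSpace ℝ G'] {F : E → G} (L : G →L[ℝ] G')
    (hF : Differentiable ℝ F) {lam : ℝ} (hbound : ∀ x, ‖L.comp (fderiv ℝ F x)‖ ≤ lam)
    (a b : E) : ‖L (F a) - L (F b)‖ ≤ lam * ‖a - b‖ :=
  convex_univ.norm_image_sub_le_of_norm_hasFDerivWithin_le (f := fun x => L (F x))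
    (fun x _ => (L.hasFDerivAt.comp x (hF x).hasFDerivAt).hasFDerivWithinAt)
    (fun x _ => hbound x) (Set.mem_univ b) (Set.mem_univ a)

theorem le_pow_mul_add_of_le_mul_add {a : ℕ → ℝ} {lam b : ℝ} (hlam0 : 0 ≤ lam) (hlam1 : lam ≠ 1)
    (hstep : ∀ t, a (t + 1) ≤ lam * a t + b) (t : ℕ) :
    a t ≤ lam ^ t * (a 0 - b / (1 - lam)) + b / (1 - lam) := by
  induction t with
  | zero => simp
  | succ t ih =>
    have hfix : lam * (b / (1 - lam)) + b = b / (1 - lam) := by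
      field_simp [sub_ne_zero.2 hlam1.symm]; ring
    calc a (t + 1) ≤ lam * a t + b := hstep t
      _ ≤ lam * (lam ^ t * (a 0 - b / (1 - lam)) + b / (1 - lam)) + b := by gcongr
      _ = lam ^ (t + 1) * (a 0 - b / (1 - lam)) + b / (1 - lam) := by linear_combination hfix

theorem limsup_le_div_one_sub_of_le_mul_add {a : ℕ → ℝ} {lam b : ℝ} (hlam0 : 0 ≤ lam)
    (hlam1 : lam < 1) (hstep : ∀ t, a (t + 1) ≤ lam * a t + b)
    (hcobdd : IsCoboundedUnder (· ≤ ·) atTop a) :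
    limsup a atTop ≤ b / (1 - lam) := by
  have hlim : Tendsto (fun t => lam ^ t * (a 0 - b / (1 - lam)) + b / (1 - lam)) atTop
      (nhds (b / (1 - lam))) := by
    simpa using ((tendsto_pow_atTop_nhds_zero_of_lt_one hlam0 hlam1).mul_const
      (a 0 - b / (1 - lam))).add_const (b / (1 - lam))
  rw [← hlim.limsup_eq]
  exact limsup_le_limsup (Eventually.of_forall
    (le_pow_mul_add_of_le_mul_add hlam0 hlam1.ne hstep)) hcobdd hlim.isBoundedUnder_le

theorem integral_le_mul_add_mul_add_of_le {Ω : Type*} [MeasurableSpace Ω] {μ : Measure Ω}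
    [IsProbabilityMeasure μ] {f g h : Ω → ℝ} {a b c : ℝ} (hf : Integrable f μ)
    (hg : Integrable g μ) (hh : Integrable h μ) (hle : ∀ ω, f ω ≤ a * g ω + b * h ω + c) :
    ∫ ω, f ω ∂μ ≤ a * ∫ ω, g ω ∂μ + b * ∫ ω, h ω ∂μ + c := by
  have hgh : Integrable (fun ω => a * g ω + b * h ω) μ := (hg.const_mul a).add (hh.const_mul b)
  calc ∫ ω, f ω ∂μ ≤ ∫ ω, (a * g ω + b * h ω + c) ∂μ :=
        integral_mono hf (hgh.add (integrable_const c)) hle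
    _ = _ := by
      rw [integral_add hgh (integrable_const c), integral_add (hg.const_mul a) (hh.const_mul b),
        integral_const_mul, integral_const_mul, integral_const, probReal_univ, one_smul]

theorem norm_threeDVar_update_sub_le {E Y : Type*} [NormedAddCommGroup E] [NormedSpace ℝ E]
    [NormedAddCommGroup Y] [NormedSpace ℝ Y] (H : E →L[ℝ] Y) (K : Y →L[ℝ] E) {F Fs : E → E}
    {lam ε γ : ℝ} (hγ : 0 ≤ γ)
    (hlip : ∀ a b, ‖(ContinuousLinearMap.id ℝ E - K.comp H) (F a)
      - (ContinuousLinearMap.id ℝ E - K.comp H) (F b)‖ ≤ lam * ‖a - b‖)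
    (hsur : ∀ x, ‖(ContinuousLinearMap.id ℝ E - K.comp H) (Fs x - F x)‖ ≤ ε) (x z : E) (e : Y) :
    ‖(ContinuousLinearMap.id ℝ E - K.comp H) (Fs x) + K (H (F z) + γ • e) - F z‖
      ≤ lam * ‖x - z‖ + γ * ‖K‖ * ‖e‖ + ε := by
  set L := ContinuousLinearMap.id ℝ E - K.comp H
  have hdecomp : L (Fs x) + K (H (F z) + γ • e) - F z
      = (L (F x) - L (F z)) + γ • K e + L (Fs x - F x) := by
    simp only [L, map_sub, map_add, map_smul, sub_apply,
      ContinuousLinearMap.coe_id', id_eq, ContinuousLinearMap.comp_apply]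
    abel
  rw [hdecomp, mul_assoc γ]
  refine norm_add₃_le.trans (add_le_add_three (hlip x z) ?_ (hsur x))
  rw [norm_smul, Real.norm_of_nonneg hγ]
  exact mul_le_mul_of_nonneg_left (K.le_opNorm e) hγ

theorem stmt_0_general {dx dy : ℕ}
    {Ω : Type} [MeasurableSpace Ω] (μ : Measure Ω) [IsProbabilityMeasure μ]
    (H : Ex dx →L[ℝ] Ex dy) (K : Ex dy →L[ℝ] Ex dx)
    (A : ℝ) :
    ∃ c > 0,
      ∀ (F Fs : Ex dx → Ex dx), ContDiff ℝ 1 F →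
      ∀ lam : ℝ, lam ∈ Set.Ioo (0 : ℝ) 1 →
      (∀ x : Ex dx,
        ‖(ContinuousLinearMap.id ℝ (Ex dx) - K.comp H).comp (fderiv ℝ F x)‖ ≤ lam) →
      ∀ ε : ℝ,
      (∀ x : Ex dx,
        ‖(ContinuousLinearMap.id ℝ (Ex dx) - K.comp H) (Fs x - F x)‖ ≤ ε) →
      ∀ γ : ℝ, 0 ≤ γ →
      ∀ η : ℕ → Ω → Ex dy,
        (∀ t : ℕ, Measurable (η t)) →
        iIndepFun η μ →
        (∀ s t : ℕ, IdentDistrib (η s) (η t) μ μ) →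
        (∀ t : ℕ, Integrable (fun ω => ‖η t ω‖) μ) →
        (∀ t : ℕ, ∫ ω, ‖η t ω‖ ∂μ ≤ A) →
      ∀ (xtrue : ℕ → Ex dx) (y : ℕ → Ω → Ex dy) (xs : ℕ → Ω → Ex dx),
        (∀ t : ℕ, xtrue (t + 1) = F (xtrue t)) →
        (∀ (t : ℕ) (ω : Ω), y (t + 1) ω = H (xtrue (t + 1)) + γ • η (t + 1) ω) →
        (∀ (t : ℕ) (ω : Ω), xs (t + 1) ω =
          (ContinuousLinearMap.id ℝ (Ex dx) - K.comp H) (Fs (xs t ω)) + K (y (t + 1) ω)) →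
        (∀ t : ℕ, Integrable (fun ω => ‖xs t ω - xtrue t‖) μ) →
        limsup (fun t => ∫ ω, ‖xs t ω - xtrue t‖ ∂μ) atTop ≤ c * (γ + ε) / (1 - lam) := by
  refine ⟨max 1 (‖K‖ * A), by positivity, ?_⟩
  intro F Fs hF lam ⟨hlam0, hlam1⟩ hcontr ε hsur γ hγ η _ _ _ hηint hηA xtrue y xs hxt hy hxs hint
  have hlip := norm_map_sub_le_of_norm_comp_fderiv_le _ (hF.differentiable one_ne_zero) hcontr
  have hstep (t : ℕ) : ∫ ω, ‖xs (t + 1) ω - xtrue (t + 1)‖ ∂μ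
      ≤ lam * ∫ ω, ‖xs t ω - xtrue t‖ ∂μ + (γ * ‖K‖ * A + ε) := calc
    _ ≤ lam * ∫ ω, ‖xs t ω - xtrue t‖ ∂μ + γ * ‖K‖ * ∫ ω, ‖η (t + 1) ω‖ ∂μ + ε :=
      integral_le_mul_add_mul_add_of_le (hint (t + 1)) (hint t) (hηint (t + 1)) fun ω => by
        rw [hxs, hy, hxt]; exact norm_threeDVar_update_sub_le H K hγ hlip hsur _ _ _
    _ ≤ _ := by
      linarith [mul_le_mul_of_nonneg_left (hηA (t + 1)) (mul_nonneg hγ (norm_nonneg K))]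
  have hε : 0 ≤ ε := (norm_nonneg _).trans (hsur 0)
  calc _ ≤ (γ * ‖K‖ * A + ε) / (1 - lam) := limsup_le_div_one_sub_of_le_mul_add hlam0.le hlam1
        hstep (isCoboundedUnder_le_of_le atTop fun t => integral_nonneg fun _ => norm_nonneg _)
    _ ≤ _ := by
      gcongr ?_ / _
      nlinarith [le_max_left 1 (‖K‖ * A), le_max_right 1 (‖K‖ * A)]

/-- Long-time accuracy of the surrogate 3DVar filter: there is a constant `c > 0`,
independent of `γ`, `lam` and `ε` (it depends only on `‖K‖` and `A`), such that for
any true dynamics `F`, surrogate dynamics `Fs`, contraction constant `lam ∈ (0,1)`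
with `‖(I - K H) ∘ DF(x)‖ ≤ lam`, surrogate-error bound
`‖(I - K H)(Fs x - F x)‖ ≤ ε`, noise level `γ ≥ 0`, i.i.d. noises with `E‖η_t‖ ≤ A`,
signal `x_t^true = F(x_{t-1}^true)`, observations `y_t = H x_t^true + γ η_t`, and
surrogate filter `x_t^s = (I - K H) Fs(x_{t-1}^s) + K y_t`, one has
`limsup_{t→∞} E‖x_t^s - x_t^true‖ ≤ c (γ + ε)/(1 - lam)`. -/
theorem stmt_0 {dx dy : ℕ} (hdx : 0 < dx) (hdy : 0 < dy)
    {Ω : Type} [MeasurableSpace Ω] (μ : Measure Ω) [IsProbabilityMeasure μ]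
    (H : Ex dx →L[ℝ] Ex dy) (K : Ex dy →L[ℝ] Ex dx)
    (A : ℝ) (hA : 0 < A) :
    ∃ c > 0,
      ∀ (F Fs : Ex dx → Ex dx), ContDiff ℝ 1 F →
      ∀ lam : ℝ, lam ∈ Set.Ioo (0 : ℝ) 1 →
      (∀ x : Ex dx,
        ‖(ContinuousLinearMap.id ℝ (Ex dx) - K.comp H).comp (fderiv ℝ F x)‖ ≤ lam) →
      ∀ ε : ℝ,
      (∀ x : Ex dx,
        ‖(ContinuousLinearMap.id ℝ (Ex dx) - K.comp H) (Fs x - F x)‖ ≤ ε) →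
      ∀ γ : ℝ, 0 ≤ γ →
      ∀ η : ℕ → Ω → Ex dy,
        (∀ t : ℕ, Measurable (η t)) →
        iIndepFun η μ →
        (∀ s t : ℕ, IdentDistrib (η s) (η t) μ μ) →
        (∀ t : ℕ, Integrable (fun ω => ‖η t ω‖) μ) →
        (∀ t : ℕ, ∫ ω, ‖η t ω‖ ∂μ ≤ A) →
      ∀ (xtrue : ℕ → Ex dx) (y : ℕ → Ω → Ex dy) (xs : ℕ → Ω → Ex dx),
        (∀ t : ℕ, xtrue (t + 1) = F (xtrue t)) →
        (∀ (t : ℕ) (ω : Ω), y (t + 1) ω = H (xtrue (t + 1)) + γ • η (t + 1) ω) →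
        (∀ (t : ℕ) (ω : Ω), xs (t + 1) ω =
          (ContinuousLinearMap.id ℝ (Ex dx) - K.comp H) (Fs (xs t ω)) + K (y (t + 1) ω)) →
        (∀ t : ℕ, Integrable (fun ω => ‖xs t ω - xtrue t‖) μ) →
        limsup (fun t => ∫ ω, ‖xs t ω - xtrue t‖ ∂μ) atTop ≤ c * (γ + ε) / (1 - lam) :=
  stmt_0_general μ H K A
end

section
/- Suppose that for every x ∈ ℝ^{d_x} the operator norm bound ‖(I − K H) ∘ DF(x)‖ ≤ λ holds for some constant λ ∈ (0,1), and that ‖(I − K H)(F_s(x) − F(x))‖ ≤ ε for every x ∈ ℝ^{d_x}. Fix any sequence of observation vectors y_t ∈ ℝ^{d_y}, and define the surrogate filter x_t^s = (I − K H) F_s(x_{t−1}^s) + K y_t and the operational filter x_t^o = (I − K H) F(x_{t−1}^o) + K y_t for t ≥ 1, initialized with x_0^s = x_0^o. Then for all t ≥ 0, ‖x_t^s − x_t^o‖ ≤ ε (1 − λ^t)/(1 − λ); in particular ‖x_t^s − x_t^o‖ ≤ ε/(1 − λ) for all t. -/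
/-! The gain-corrected map `x ↦ (I - K H) F x` is a `λ`-contraction by the mean value inequality,
and the surrogate step differs from the operational one by at most `ε`. Hence the error
`e_t = ‖x_t^s - x_t^o‖` obeys `e_{t+1} ≤ ε + λ e_t` with `e_0 = 0`, and unrolling this recursion
bounds `e_t` by the geometric sum `ε (1 + λ + ⋯ + λ^{t-1}) = ε (1 - λ^t) / (1 - λ)`. -/

open Filter

theorem norm_map_sub_map_le_of_norm_comp_fderiv_le
    {E F G : Type*} [NormedAddCommGroup E] [NormedSpace ℝ E] [NormedAddCommGroup F]
    [NormedSpace ℝ F] [NormedAddCommGroup G] [NormedSpace ℝ G]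
    {f : E → F} (hf : Differentiable ℝ f) (L : F →L[ℝ] G) {C : ℝ}
    (hC : ∀ x, ‖L.comp (fderiv ℝ f x)‖ ≤ C) (a b : E) :
    ‖L (f a) - L (f b)‖ ≤ C * ‖a - b‖ :=
  convex_univ.norm_image_sub_le_of_norm_hasFDerivWithin_le
    (fun x _ => (L.hasFDerivAt.comp x (hf x).hasFDerivAt).hasFDerivWithinAt)
    (fun x _ => hC x) (Set.mem_univ b) (Set.mem_univ a)

theorem le_mul_geom_sum_of_le_add_mul {e : ℕ → ℝ} {ε lam : ℝ} (hlam : 0 ≤ lam)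
    (h0 : e 0 ≤ 0) (hstep : ∀ t, e (t + 1) ≤ ε + lam * e t) (t : ℕ) :
    e t ≤ ε * ∑ i ∈ Finset.range t, lam ^ i := by
  induction t with
  | zero => simpa using h0
  | succ t ih =>
    calc e (t + 1) ≤ ε + lam * (ε * ∑ i ∈ Finset.range t, lam ^ i) :=
          (hstep t).trans (add_le_add_right (mul_le_mul_of_nonneg_left ih hlam) ε)
      _ = ε * ∑ i ∈ Finset.range (t + 1), lam ^ i := by
          rw [geom_sum_succ]
          ring

theorem stmt_2_general {dx dy : ℕ}
    (F Fs : Ex dx → Ex dx) (hF : ContDiff ℝ 1 F)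
    (H : Ex dx →L[ℝ] Ex dy) (K : Ex dy →L[ℝ] Ex dx)
    (lam : ℝ) (hlam : lam ∈ Set.Ioo (0 : ℝ) 1)
    (hderiv : ∀ x : Ex dx,
      ‖(ContinuousLinearMap.id ℝ (Ex dx) - K.comp H).comp (fderiv ℝ F x)‖ ≤ lam)
    (ε : ℝ)
    (hsur : ∀ x : Ex dx,
      ‖(ContinuousLinearMap.id ℝ (Ex dx) - K.comp H) (Fs x - F x)‖ ≤ ε)
    (y : ℕ → Ex dy) (xs xo : ℕ → Ex dx)
    (h0 : xs 0 = xo 0)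
    (hxs : ∀ t : ℕ, xs (t + 1) =
      (ContinuousLinearMap.id ℝ (Ex dx) - K.comp H) (Fs (xs t)) + K (y (t + 1)))
    (hxo : ∀ t : ℕ, xo (t + 1) =
      (ContinuousLinearMap.id ℝ (Ex dx) - K.comp H) (F (xo t)) + K (y (t + 1))) :
    (∀ t : ℕ, ‖xs t - xo t‖ ≤ ε * (1 - lam ^ t) / (1 - lam)) ∧
      (∀ t : ℕ, ‖xs t - xo t‖ ≤ ε / (1 - lam)) := by
  obtain ⟨hlam0, hlam1⟩ := hlam
  set L := ContinuousLinearMap.id ℝ (Ex dx) - K.comp H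
  have hε : 0 ≤ ε := (norm_nonneg _).trans (hsur 0)
  have hstep (t : ℕ) : ‖xs (t + 1) - xo (t + 1)‖ ≤ ε + lam * ‖xs t - xo t‖ := by
    have hsplit : xs (t + 1) - xo (t + 1)
        = L (Fs (xs t) - F (xs t)) + (L (F (xs t)) - L (F (xo t))) := by
      rw [hxs, hxo, map_sub]
      abel
    rw [hsplit]
    exact (norm_add_le _ _).trans <| add_le_add (hsur _) <|
      norm_map_sub_map_le_of_norm_comp_fderiv_le (hF.differentiable one_ne_zero) L hderiv _ _
  have hbound (t : ℕ) : ‖xs t - xo t‖ ≤ ε * (1 - lam ^ t) / (1 - lam) := by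
    have := le_mul_geom_sum_of_le_add_mul (e := fun t => ‖xs t - xo t‖) hlam0.le
      (by simp [h0]) hstep t
    rwa [geom_sum_eq hlam1.ne, ← neg_div_neg_eq, neg_sub, neg_sub, ← mul_div_assoc] at this
  refine ⟨hbound, fun t => (hbound t).trans ?_⟩
  gcongr
  exact mul_le_of_le_one_right hε (sub_le_self _ (pow_nonneg hlam0.le t))

/-- Distance between the surrogate 3DVar filter and the operational 3DVar filter,
driven by the same observations and started at the same point:
`‖x_t^s - x_t^o‖ ≤ ε (1 - lam^t)/(1 - lam)`, and in particular
`‖x_t^s - x_t^o‖ ≤ ε/(1 - lam)`, for all `t ≥ 0`. -/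
theorem stmt_2 {dx dy : ℕ} (hdx : 0 < dx) (hdy : 0 < dy)
    (F Fs : Ex dx → Ex dx) (hF : ContDiff ℝ 1 F)
    (H : Ex dx →L[ℝ] Ex dy) (K : Ex dy →L[ℝ] Ex dx)
    (lam : ℝ) (hlam : lam ∈ Set.Ioo (0 : ℝ) 1)
    (hderiv : ∀ x : Ex dx,
      ‖(ContinuousLinearMap.id ℝ (Ex dx) - K.comp H).comp (fderiv ℝ F x)‖ ≤ lam)
    (ε : ℝ)
    (hsur : ∀ x : Ex dx,
      ‖(ContinuousLinearMap.id ℝ (Ex dx) - K.comp H) (Fs x - F x)‖ ≤ ε)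
    (y : ℕ → Ex dy) (xs xo : ℕ → Ex dx)
    (h0 : xs 0 = xo 0)
    (hxs : ∀ t : ℕ, xs (t + 1) =
      (ContinuousLinearMap.id ℝ (Ex dx) - K.comp H) (Fs (xs t)) + K (y (t + 1)))
    (hxo : ∀ t : ℕ, xo (t + 1) =
      (ContinuousLinearMap.id ℝ (Ex dx) - K.comp H) (F (xo t)) + K (y (t + 1))) :
    (∀ t : ℕ, ‖xs t - xo t‖ ≤ ε * (1 - lam ^ t) / (1 - lam)) ∧
      (∀ t : ℕ, ‖xs t - xo t‖ ≤ ε / (1 - lam)) :=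
  stmt_2_general F Fs hF H K lam hlam hderiv ε hsur y xs xo h0 hxs hxo
end

section
/- Suppose that for every x ∈ ℝ^{d_x} the operator norm bound ‖(I − K H) ∘ DF(x)‖ ≤ λ holds for some constant λ ∈ (0,1). Let the true signal satisfy x_t^true = F(x_{t−1}^true) for t ≥ 1, and suppose the observations are noise-free: y_t = H x_t^true. Let the operational 3DVar filter satisfy x_t^o = (I − K H) F(x_{t−1}^o) + K y_t for t ≥ 1. Then for every t ≥ 0, ‖x_t^o − x_t^true‖ ≤ λ^t ‖x_0^o − x_0^true‖; in particular x_t^o − x_t^true → 0 as t → ∞. -/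
/-!
With noise-free observations the true trajectory is itself an orbit of the filter: since
`(I - K H) (F x) + K (H (F x)) = F x`, both `xᵗʳᵘᵉ` and `xᵒ` follow the same time-dependent
maps `x ↦ (I - K H) (F x) + K yₜ₊₁`. By the mean value inequality each of these maps is
`λ`-Lipschitz, so the distance between the two orbits contracts by `λ` at every step.
-/

open Filter Topology

open scoped NNReal

theorem LipschitzWith.add_const {E : Type*} [SeminormedAddCommGroup E] {K : ℝ≥0} {g : E → E}
    (hg : LipschitzWith K g) (c : E) : LipschitzWith K (fun x => g x + c) :=
  LipschitzWith.of_dist_le_mul fun a b => by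
    simpa only [dist_add_right] using hg.dist_le_mul a b

theorem ContinuousLinearMap.lipschitzWith_comp_of_norm_comp_fderiv_le {𝕜 E F G : Type*}
    [RCLike 𝕜] [NormedAddCommGroup E] [NormedSpace 𝕜 E] [NormedAddCommGroup F]
    [NormedSpace 𝕜 F] [NormedAddCommGroup G] [NormedSpace 𝕜 G] (A : F →L[𝕜] G) {f : E → F}
    (hf : Differentiable 𝕜 f) {C : ℝ≥0} (bound : ∀ x, ‖A.comp (fderiv 𝕜 f x)‖ ≤ C) :
    LipschitzWith C (A ∘ f) := by
  refine lipschitzWith_of_nnnorm_fderiv_le (A.differentiable.comp hf) fun x => ?_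
  rw [fderiv_comp x A.differentiableAt (hf x), ContinuousLinearMap.fderiv]
  exact bound x

theorem dist_le_pow_mul_of_lipschitzWith_orbits {X : Type*} [PseudoMetricSpace X] {K : ℝ≥0}
    {f : ℕ → X → X} (hf : ∀ t, LipschitzWith K (f t)) {u v : ℕ → X}
    (hu : ∀ t, u (t + 1) = f t (u t)) (hv : ∀ t, v (t + 1) = f t (v t)) (t : ℕ) :
    dist (u t) (v t) ≤ K ^ t * dist (u 0) (v 0) := by
  induction t with
  | zero => simp
  | succ n ih =>
    calc dist (u (n + 1)) (v (n + 1)) ≤ K * dist (u n) (v n) := by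
          rw [hu, hv]; exact (hf n).dist_le_mul _ _
      _ ≤ K * (K ^ n * dist (u 0) (v 0)) := by gcongr
      _ = K ^ (n + 1) * dist (u 0) (v 0) := by ring

theorem stmt_7_general {dx dy : ℕ}
    (F : Ex dx → Ex dx) (hF : ContDiff ℝ 1 F)
    (H : Ex dx →L[ℝ] Ex dy) (K : Ex dy →L[ℝ] Ex dx)
    (lam : ℝ) (hlam : lam ∈ Set.Ioo (0 : ℝ) 1)
    (hderiv : ∀ x : Ex dx,
      ‖(ContinuousLinearMap.id ℝ (Ex dx) - K.comp H).comp (fderiv ℝ F x)‖ ≤ lam)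
    (xtrue : ℕ → Ex dx) (y : ℕ → Ex dy) (xo : ℕ → Ex dx)
    (hxtrue : ∀ t : ℕ, xtrue (t + 1) = F (xtrue t))
    (hy : ∀ t : ℕ, y t = H (xtrue t))
    (hxo : ∀ t : ℕ, xo (t + 1) =
      (ContinuousLinearMap.id ℝ (Ex dx) - K.comp H) (F (xo t)) + K (y (t + 1))) :
    (∀ t : ℕ, ‖xo t - xtrue t‖ ≤ lam ^ t * ‖xo 0 - xtrue 0‖) ∧
      Tendsto (fun t => xo t - xtrue t) atTop (𝓝 0) := by
  obtain ⟨hlam0, hlam1⟩ := hlam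
  set T := ContinuousLinearMap.id ℝ (Ex dx) - K.comp H
  set step : ℕ → Ex dx → Ex dx := fun t x => T (F x) + K (y (t + 1))
  have hstep : ∀ t, LipschitzWith lam.toNNReal (step t) := fun t =>
    (T.lipschitzWith_comp_of_norm_comp_fderiv_le (hF.differentiable one_ne_zero)
      (by simpa [hlam0.le] using hderiv)).add_const _
  have hxtrue_step : ∀ t, xtrue (t + 1) = step t (xtrue t) := fun t => by
    simp [step, T, hy, ← hxtrue]
  have hbound : ∀ t, ‖xo t - xtrue t‖ ≤ lam ^ t * ‖xo 0 - xtrue 0‖ := fun t => by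
    simpa [dist_eq_norm, hlam0.le] using
      dist_le_pow_mul_of_lipschitzWith_orbits hstep hxo hxtrue_step t
  refine ⟨hbound, tendsto_zero_iff_norm_tendsto_zero.mpr ?_⟩
  refine squeeze_zero (fun _ => norm_nonneg _) hbound ?_
  simpa using (tendsto_pow_atTop_nhds_zero_of_lt_one hlam0.le hlam1).mul_const ‖xo 0 - xtrue 0‖

/-- With noise-free observations `y_t = H x_t^true`, the operational 3DVar filter
synchronizes with the truth: `‖x_t^o - x_t^true‖ ≤ lam^t ‖x_0^o - x_0^true‖`,
and in particular `x_t^o - x_t^true → 0` as `t → ∞`. -/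
theorem stmt_7 {dx dy : ℕ} (hdx : 0 < dx) (hdy : 0 < dy)
    (F : Ex dx → Ex dx) (hF : ContDiff ℝ 1 F)
    (H : Ex dx →L[ℝ] Ex dy) (K : Ex dy →L[ℝ] Ex dx)
    (lam : ℝ) (hlam : lam ∈ Set.Ioo (0 : ℝ) 1)
    (hderiv : ∀ x : Ex dx,
      ‖(ContinuousLinearMap.id ℝ (Ex dx) - K.comp H).comp (fderiv ℝ F x)‖ ≤ lam)
    (xtrue : ℕ → Ex dx) (y : ℕ → Ex dy) (xo : ℕ → Ex dx)
    (hxtrue : ∀ t : ℕ, xtrue (t + 1) = F (xtrue t))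
    (hy : ∀ t : ℕ, y t = H (xtrue t))
    (hxo : ∀ t : ℕ, xo (t + 1) =
      (ContinuousLinearMap.id ℝ (Ex dx) - K.comp H) (F (xo t)) + K (y (t + 1))) :
    (∀ t : ℕ, ‖xo t - xtrue t‖ ≤ lam ^ t * ‖xo 0 - xtrue 0‖) ∧
      Tendsto (fun t => xo t - xtrue t) atTop (𝓝 0) :=
  stmt_7_general F hF H K lam hlam hderiv xtrue y xo hxtrue hy hxo
end

section
/- Suppose ‖(I − K H)(F_s(x) − F(x))‖ ≤ ε and ‖(I − K H)(F(x) − F(y))‖ ≤ λ ‖x − y‖ for all x, y ∈ ℝ^{d_x}, with λ ∈ (0,1). Fix any sequence of observation vectors y_t ∈ ℝ^{d_y}, and define x_t^s = (I − K H) F_s(x_{t−1}^s) + K y_t and x_t^o = (I − K H) F(x_{t−1}^o) + K y_t for t ≥ 1. Then for every t ≥ 1, x_t^s − x_t^o = (I − K H)(F_s(x_{t−1}^s) − F(x_{t−1}^s)) + (I − K H)(F(x_{t−1}^s) − F(x_{t−1}^o)), and consequently limsup_{t→∞} ‖x_t^s − x_t^o‖ ≤ ε/(1 − λ). -/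
/-!
The two filters see the same observations, so the `K y_t` terms cancel in the difference and
the error `e_t = ‖x_t^s - x_t^o‖` obeys `e_{t+1} ≤ ε + λ e_t`: the first term of the
decomposition is the surrogate's model error, the second is contracted by `(I - K H) F`.
With `c = ε / (1 - λ)` the fixed point of `e ↦ λ e + ε`, this gives
`e_t - c ≤ λ^t (e_0 - c) → 0`.
-/

open Filter

section AffineContraction

variable {e : ℕ → ℝ} {lam ε : ℝ}

theorem sub_div_one_sub_le_pow_mul (hlam₀ : 0 ≤ lam) (hlam₁ : lam < 1)
    (hrec : ∀ t, e (t + 1) ≤ lam * e t + ε) (t : ℕ) :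
    e t - ε / (1 - lam) ≤ lam ^ t * (e 0 - ε / (1 - lam)) := by
  have hfix : lam * (ε / (1 - lam)) + ε = ε / (1 - lam) := by
    field_simp [(sub_pos.mpr hlam₁).ne']
    ring
  induction t with
  | zero => simp
  | succ n ih =>
    calc e (n + 1) - ε / (1 - lam) ≤ lam * (e n - ε / (1 - lam)) := by linarith [hrec n]
      _ ≤ lam * (lam ^ n * (e 0 - ε / (1 - lam))) := mul_le_mul_of_nonneg_left ih hlam₀
      _ = lam ^ (n + 1) * (e 0 - ε / (1 - lam)) := by ring

theorem limsup_le_div_one_sub_of_le_mul_add_s10 (he : ∀ t, 0 ≤ e t) (hlam₀ : 0 ≤ lam)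
    (hlam₁ : lam < 1) (hrec : ∀ t, e (t + 1) ≤ lam * e t + ε) :
    limsup e atTop ≤ ε / (1 - lam) := by
  have hbound : Tendsto (fun t ↦ lam ^ t * (e 0 - ε / (1 - lam)) + ε / (1 - lam)) atTop
      (nhds (ε / (1 - lam))) := by
    simpa using ((tendsto_pow_atTop_nhds_zero_of_lt_one hlam₀ hlam₁).mul_const
      (e 0 - ε / (1 - lam))).add_const (ε / (1 - lam))
  rw [← hbound.limsup_eq]
  refine limsup_le_limsup (Eventually.of_forall fun t ↦ ?_)
    (isBoundedUnder_of ⟨0, he⟩).isCoboundedUnder_le hbound.isBoundedUnder_le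
  linarith [sub_div_one_sub_le_pow_mul hlam₀ hlam₁ hrec t]

end AffineContraction

theorem stmt_10_general {dx dy : ℕ}
    (F Fs : Ex dx → Ex dx)
    (H : Ex dx →L[ℝ] Ex dy) (K : Ex dy →L[ℝ] Ex dx)
    (lam ε : ℝ) (hlam : lam ∈ Set.Ioo (0 : ℝ) 1)
    (hsur : ∀ x : Ex dx,
      ‖(ContinuousLinearMap.id ℝ (Ex dx) - K.comp H) (Fs x - F x)‖ ≤ ε)
    (hlip : ∀ x y : Ex dx,
      ‖(ContinuousLinearMap.id ℝ (Ex dx) - K.comp H) (F x - F y)‖ ≤ lam * ‖x - y‖)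
    (y : ℕ → Ex dy) (xs xo : ℕ → Ex dx)
    (hxs : ∀ t : ℕ, xs (t + 1) =
      (ContinuousLinearMap.id ℝ (Ex dx) - K.comp H) (Fs (xs t)) + K (y (t + 1)))
    (hxo : ∀ t : ℕ, xo (t + 1) =
      (ContinuousLinearMap.id ℝ (Ex dx) - K.comp H) (F (xo t)) + K (y (t + 1))) :
    (∀ t : ℕ, xs (t + 1) - xo (t + 1) =
        (ContinuousLinearMap.id ℝ (Ex dx) - K.comp H) (Fs (xs t) - F (xs t))
          + (ContinuousLinearMap.id ℝ (Ex dx) - K.comp H) (F (xs t) - F (xo t))) ∧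
      limsup (fun t => ‖xs t - xo t‖) atTop ≤ ε / (1 - lam) := by
  set A := ContinuousLinearMap.id ℝ (Ex dx) - K.comp H
  have hdecomp : ∀ t, xs (t + 1) - xo (t + 1) =
      A (Fs (xs t) - F (xs t)) + A (F (xs t) - F (xo t)) := by
    intro t
    rw [hxs t, hxo t, map_sub, map_sub]
    abel
  refine ⟨hdecomp, limsup_le_div_one_sub_of_le_mul_add_s10 (fun t ↦ norm_nonneg _)
    hlam.1.le hlam.2 fun t ↦ ?_⟩
  calc ‖xs (t + 1) - xo (t + 1)‖
      ≤ ‖A (Fs (xs t) - F (xs t))‖ + ‖A (F (xs t) - F (xo t))‖ := by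
        rw [hdecomp t]; exact norm_add_le _ _
    _ ≤ ε + lam * ‖xs t - xo t‖ := add_le_add (hsur _) (hlip _ _)
    _ = lam * ‖xs t - xo t‖ + ε := add_comm _ _

/-- Error decomposition identity between the surrogate and operational 3DVar filters,
`x_t^s - x_t^o = (I - K H)(F_s(x_{t-1}^s) - F(x_{t-1}^s)) + (I - K H)(F(x_{t-1}^s) - F(x_{t-1}^o))`,
and the resulting long-time bound `limsup_{t→∞} ‖x_t^s - x_t^o‖ ≤ ε/(1 - lam)`. -/
theorem stmt_10 {dx dy : ℕ} (hdx : 0 < dx) (hdy : 0 < dy)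
    (F Fs : Ex dx → Ex dx)
    (H : Ex dx →L[ℝ] Ex dy) (K : Ex dy →L[ℝ] Ex dx)
    (lam ε : ℝ) (hlam : lam ∈ Set.Ioo (0 : ℝ) 1)
    (hsur : ∀ x : Ex dx,
      ‖(ContinuousLinearMap.id ℝ (Ex dx) - K.comp H) (Fs x - F x)‖ ≤ ε)
    (hlip : ∀ x y : Ex dx,
      ‖(ContinuousLinearMap.id ℝ (Ex dx) - K.comp H) (F x - F y)‖ ≤ lam * ‖x - y‖)
    (y : ℕ → Ex dy) (xs xo : ℕ → Ex dx)
    (hxs : ∀ t : ℕ, xs (t + 1) =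
      (ContinuousLinearMap.id ℝ (Ex dx) - K.comp H) (Fs (xs t)) + K (y (t + 1)))
    (hxo : ∀ t : ℕ, xo (t + 1) =
      (ContinuousLinearMap.id ℝ (Ex dx) - K.comp H) (F (xo t)) + K (y (t + 1))) :
    (∀ t : ℕ, xs (t + 1) - xo (t + 1) =
        (ContinuousLinearMap.id ℝ (Ex dx) - K.comp H) (Fs (xs t) - F (xs t))
          + (ContinuousLinearMap.id ℝ (Ex dx) - K.comp H) (F (xs t) - F (xo t))) ∧
      limsup (fun t => ‖xs t - xo t‖) atTop ≤ ε / (1 - lam) :=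
  stmt_10_general F Fs H K lam ε hlam hsur hlip y xs xo hxs hxo
end
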